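/- No-cloning theorem: there is no unitary operator U on H ⊗ H and fixed unit vector |e⟩ ∈ H (dim H ≥ 2) such that U(|ψ⟩ ⊗ |e⟩) = |ψ⟩ ⊗ |ψ⟩ for all unit vectors |ψ⟩ ∈ H. -/
import Mathlib
open Matrix

lemma tensor_dot {n : ℕ} (a b c d : Fin n → ℂ) :
    star (fun p : Fin n × Fin n => a p.1 * b p.2) ⬝ᵥ (fun p : Fin n × Fin n => c p.1 * d p.2)
      = (star a ⬝ᵥ c) * (star b ⬝ᵥ d) := by
  simp only [dotProduct, Pi.star_apply, star_mul', Fintype.sum_prod_type]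
  rw [Finset.sum_mul_sum]
  apply Finset.sum_congr rfl; intro i _
  apply Finset.sum_congr rfl; intro j _
  ring

lemma unitary_dot {m : Type*} [Fintype m] [DecidableEq m]
    (U : Matrix m m ℂ) (hU : U ∈ Matrix.unitaryGroup m ℂ) (x y : m → ℂ) :
    star (U.mulVec x) ⬝ᵥ (U.mulVec y) = star x ⬝ᵥ y := by
  rw [star_mulVec, dotProduct_mulVec, vecMul_vecMul]
  have : Uᴴ * U = 1 := Matrix.mem_unitaryGroup_iff'.mp hU
  rw [this, vecMul_one]

/-- No-cloning theorem: for `H = ℂ^n` with `n ≥ 2` (and `H ⊗ H` identified with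
`ℂ^(n×n)` via coordinates), there is no unitary `U` and fixed unit vector `e` such that
`U(ψ ⊗ e) = ψ ⊗ ψ` for all unit vectors `ψ`. -/
theorem stmt_15 {n : ℕ} (hn : 2 ≤ n) :
    ¬ ∃ (U : Matrix (Fin n × Fin n) (Fin n × Fin n) ℂ) (e : Fin n → ℂ),
      U ∈ Matrix.unitaryGroup (Fin n × Fin n) ℂ ∧
      star e ⬝ᵥ e = 1 ∧
      ∀ ψ : Fin n → ℂ, star ψ ⬝ᵥ ψ = 1 →
        U.mulVec (fun p => ψ p.1 * e p.2) = fun p => ψ p.1 * ψ p.2 := by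
  rintro ⟨U, e, hU, he, hc⟩
  set i0 : Fin n := ⟨0, by omega⟩ with hi0
  set i1 : Fin n := ⟨1, by omega⟩ with hi1
  have hne : i0 ≠ i1 := by simp [hi0, hi1, Fin.ext_iff]
  set r : ℂ := ((Real.sqrt 2 : ℝ) : ℂ)⁻¹ with hr
  have hsqrt : Real.sqrt 2 ≠ 0 := by positivity
  have hr0 : r ≠ 0 := by simpa [hr] using hsqrt
  have hrstar : star r = r := by
    simp [hr, ← Complex.ofReal_inv, Complex.conj_ofReal]
  have hrr : r * r = (2 : ℂ)⁻¹ := by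
    rw [hr, ← mul_inv, ← Complex.ofReal_mul, Real.mul_self_sqrt (by norm_num)]
    norm_num
  set ψ : Fin n → ℂ := Pi.single i0 1 with hψdef
  set φ : Fin n → ℂ := r • (Pi.single i0 1 + Pi.single i1 1) with hφdef
  have hsψ : star ψ = ψ := by
    funext i
    by_cases h : i = i0 <;> simp [hψdef, h, Pi.single_eq_of_ne]
  have hsφ : star φ = φ := by
    funext i
    rcases eq_or_ne i i0 with h | h
    · simp [hφdef, h, hne.symm, Pi.single_eq_of_ne, hrstar]
    rcases eq_or_ne i i1 with h' | h'
    · simp [hφdef, h', hne, Pi.single_eq_of_ne, hrstar]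
    · simp [hφdef, Pi.single_eq_of_ne, h, h']
  have d00 : (Pi.single i0 1 : Fin n → ℂ) ⬝ᵥ Pi.single i0 1 = 1 := by
    simp [single_dotProduct]
  have d11 : (Pi.single i1 1 : Fin n → ℂ) ⬝ᵥ Pi.single i1 1 = 1 := by
    simp [single_dotProduct]
  have d01 : (Pi.single i0 1 : Fin n → ℂ) ⬝ᵥ Pi.single i1 1 = 0 := by
    simp [single_dotProduct, Pi.single_eq_of_ne hne.symm]
  have d10 : (Pi.single i1 1 : Fin n → ℂ) ⬝ᵥ Pi.single i0 1 = 0 := by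
    simp [single_dotProduct, Pi.single_eq_of_ne hne]
  have hψ1 : star ψ ⬝ᵥ ψ = 1 := by rw [hsψ, hψdef, d00]
  have hφ1 : star φ ⬝ᵥ φ = 1 := by
    rw [hsφ, hφdef]
    simp only [smul_dotProduct, dotProduct_smul, add_dotProduct, dotProduct_add,
      d00, d11, d01, d10, smul_eq_mul]
    have h : r * (r * (1 + 0) + r * (0 + 1)) = r * r * 2 := by ring
    rw [h, hrr]; norm_num
  have hc' : star ψ ⬝ᵥ φ = r := by
    rw [hsψ, hψdef, hφdef]
    simp only [dotProduct_smul, dotProduct_add, d00, d01, smul_eq_mul]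
    ring
  have key := unitary_dot U hU (fun p => ψ p.1 * e p.2) (fun p => φ p.1 * e p.2)
  rw [hc ψ hψ1, hc φ hφ1, tensor_dot, tensor_dot, he, mul_one, hc'] at key
  -- key : r * r = r
  have : r = 1 := by
    have := mul_right_cancel₀ hr0 (key.trans (one_mul r).symm)
    simpa using this
  rw [hr, inv_eq_one] at this
  have : Real.sqrt 2 = 1 := by exact_mod_cast this
  have h2 := Real.sq_sqrt (by norm_num : (0:ℝ) ≤ 2)
  rw [this] at h2
  norm_num at h2
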